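/- arXiv:1807.10399 — 2 statements merged into one kernel-verified Lean document; each statement's English description precedes it below -/
import Mathlib

section
/- (Monotone decrease of the loss for β = 1.) Let p be a strictly positive joint pmf on Fin m × Fin n and q a strictly positive conditional pmf. Then the LatentSearch update with β = 1 produces a strictly positive conditional pmf T_1(q), and the loss does not increase: L_1(T_1(q)) ≤ L_1(q). -/
/-!
For `β = 1` the loss splits as `L₁(q) = I(X;Y) + F(q, qX q, qY q)`, where
`F(q, a, b) = ∑ q(z|x,y) p(x,y) (log q(z|x,y) - log a(z|x) - log b(z|y))`.
For fixed `q`, the marginals `qX q` and `qY q` minimise `F(q, ·, ·)`: each is a mixture of the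
distributions `q(·|x,y)`, and the average cross-entropy of these components relative to a
distribution `a` is smallest when `a` is their mixture (Gibbs).
For fixed `a, b`, the function `F(·, a, b)` is minimised by `q ∝ a b`, with minimum
`∑ p(x,y) (-log ∑_z a(z|x) b(z|y))` (Gibbs again). With `a = qX q`, `b = qY q` this minimiser is
`T₁(q)`, so an update is one round of alternating minimisation of `F` and cannot increase the loss.
-/

open Real Finset Filter

/-- A strictly positive joint pmf on `Fin m × Fin n`. -/
def IsJointPMF {m n : ℕ} (p : Fin m → Fin n → ℝ) : Prop :=
  (∀ x y, 0 < p x y) ∧ (∑ x, ∑ y, p x y = 1)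

/-- A strictly positive conditional pmf `q z x y = q(z | x, y)`. -/
def IsCondPMF {m n k : ℕ} (q : Fin k → Fin m → Fin n → ℝ) : Prop :=
  (∀ z x y, 0 < q z x y) ∧ (∀ x y, ∑ z, q z x y = 1)

/-- Marginal `q(z | x)`. -/
noncomputable def qX {m n k : ℕ} (p : Fin m → Fin n → ℝ)
    (q : Fin k → Fin m → Fin n → ℝ) (z : Fin k) (x : Fin m) : ℝ :=
  (∑ y, q z x y * p x y) / (∑ y, p x y)

/-- Marginal `q(z | y)`. -/
noncomputable def qY {m n k : ℕ} (p : Fin m → Fin n → ℝ)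
    (q : Fin k → Fin m → Fin n → ℝ) (z : Fin k) (y : Fin n) : ℝ :=
  (∑ x, q z x y * p x y) / (∑ x, p x y)

/-- Marginal `q(z)`. -/
noncomputable def qZ {m n k : ℕ} (p : Fin m → Fin n → ℝ)
    (q : Fin k → Fin m → Fin n → ℝ) (z : Fin k) : ℝ :=
  ∑ x, ∑ y, q z x y * p x y

/-- The LatentSearch update `T_β(q)`. Here `(qZ z) ^ (1 - β)` is the real power `rpow`. -/
noncomputable def latentUpdate {m n k : ℕ} (β : ℝ) (p : Fin m → Fin n → ℝ)
    (q : Fin k → Fin m → Fin n → ℝ) : Fin k → Fin m → Fin n → ℝ :=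
  fun z x y =>
    (qX p q z x * qY p q z y / (qZ p q z) ^ (1 - β)) /
      (∑ z', qX p q z' x * qY p q z' y / (qZ p q z') ^ (1 - β))

/-- The loss `L_β(q) = I(X;Y|Z) + β H(Z)` computed from the joint `r(x,y,z) = q z x y * p x y`. -/
noncomputable def loss {m n k : ℕ} (β : ℝ) (p : Fin m → Fin n → ℝ)
    (q : Fin k → Fin m → Fin n → ℝ) : ℝ :=
  (∑ x, ∑ y, ∑ z, (q z x y * p x y) *
      Real.log ((q z x y * p x y) * qZ p q z /
        ((∑ y', q z x y' * p x y') * (∑ x', q z x' y * p x' y)))) -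
    β * ∑ z, qZ p q z * Real.log (qZ p q z)

/-- The mutual information `I(X;Y)` of the observed joint pmf `p`. -/
noncomputable def mutualInfo {m n : ℕ} (p : Fin m → Fin n → ℝ) : ℝ :=
  ∑ x, ∑ y, p x y * Real.log (p x y / ((∑ y', p x y') * (∑ x', p x' y)))

namespace Real

variable {ι : Type*} [Fintype ι]

theorem neg_log_sum_le_sum_mul_log_sub (c g : ι → ℝ) (hc : ∀ i, 0 < c i)
    (hc1 : ∑ i, c i = 1) (hg : ∀ i, 0 < g i) :
    -log (∑ i, g i) ≤ ∑ i, c i * (log (c i) - log (g i)) := by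
  have jensen := strictConcaveOn_log_Ioi.concaveOn.le_map_sum (t := univ) (w := c)
    (p := fun i => g i / c i) (fun i _ => (hc i).le) hc1 (fun i _ => div_pos (hg i) (hc i))
  calc -log (∑ i, g i) = -log (∑ i, c i • (g i / c i)) := by
        simp only [smul_eq_mul, mul_div_cancel₀ _ (hc _).ne']
    _ ≤ -∑ i, c i • log (g i / c i) := neg_le_neg jensen
    _ = ∑ i, c i * (log (c i) - log (g i)) := by
        simp only [smul_eq_mul, ← sum_neg_distrib, log_div (hg _).ne' (hc _).ne']
        exact sum_congr rfl fun i _ => by ring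

theorem neg_log_sum_eq_sum_mul_log_sub [Nonempty ι] (c g : ι → ℝ) (hg : ∀ i, 0 < g i)
    (hc : ∀ i, c i = g i / ∑ j, g j) :
    -log (∑ i, g i) = ∑ i, c i * (log (c i) - log (g i)) := by
  have hG : 0 < ∑ j, g j := sum_pos (fun i _ => hg i) univ_nonempty
  have hc1 : ∑ i, c i = 1 := by simp only [hc, ← sum_div, div_self hG.ne']
  calc -log (∑ i, g i) = ∑ i, c i * -log (∑ j, g j) := by rw [← sum_mul, hc1, one_mul]
    _ = ∑ i, c i * (log (c i) - log (g i)) := by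
        refine sum_congr rfl fun i _ => ?_
        rw [hc, log_div (hg i).ne' hG.ne']
        ring

end Real

section Mixture

variable {ι Z : Type*} [Fintype ι]

noncomputable def mixture (w : ι → ℝ) (c : Z → ι → ℝ) (z : Z) : ℝ :=
  (∑ i, c z i * w i) / ∑ i, w i

variable [Nonempty ι] {w : ι → ℝ} {c : Z → ι → ℝ}

theorem mixture_pos (hw : ∀ i, 0 < w i) (hc : ∀ z i, 0 < c z i) (z : Z) : 0 < mixture w c z :=
  div_pos (sum_pos (fun i _ => mul_pos (hc z i) (hw i)) univ_nonempty)
    (sum_pos (fun i _ => hw i) univ_nonempty)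

theorem sum_mixture [Fintype Z] (hw : ∀ i, 0 < w i) (hc : ∀ i, ∑ z, c z i = 1) :
    ∑ z, mixture w c z = 1 := by
  have hW : 0 < ∑ i, w i := sum_pos (fun i _ => hw i) univ_nonempty
  simp only [mixture, ← sum_div]
  rw [sum_comm, div_eq_one_iff_eq hW.ne']
  exact sum_congr rfl fun i _ => by rw [← sum_mul, hc, one_mul]

theorem sum_sum_mul_log_le_sum_sum_mul_log_mixture [Fintype Z] (hw : ∀ i, 0 < w i)
    (hc : ∀ z i, 0 < c z i) (hc1 : ∀ i, ∑ z, c z i = 1) (a : Z → ℝ) (ha : ∀ z, 0 < a z)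
    (ha1 : ∑ z, a z = 1) :
    ∑ i, ∑ z, c z i * w i * log (a z) ≤ ∑ i, ∑ z, c z i * w i * log (mixture w c z) := by
  have hW : 0 < ∑ i, w i := sum_pos (fun i _ => hw i) univ_nonempty
  have factor : ∀ f : Z → ℝ,
      ∑ i, ∑ z, c z i * w i * f z = (∑ i, w i) * ∑ z, mixture w c z * f z := by
    intro f
    simp only [mixture, mul_sum, ← mul_assoc, mul_div_cancel₀ _ hW.ne', sum_mul]
    exact sum_comm
  have gibbs := Real.neg_log_sum_le_sum_mul_log_sub (mixture w c) a (mixture_pos hw hc)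
    (sum_mixture hw hc1) ha
  rw [ha1, log_one, neg_zero] at gibbs
  simp only [mul_sub, sum_sub_distrib, sub_nonneg] at gibbs
  rw [factor, factor]
  exact mul_le_mul_of_nonneg_left gibbs hW.le

end Mixture

section LatentSearch

variable {m n k : ℕ} {p : Fin m → Fin n → ℝ} {q : Fin k → Fin m → Fin n → ℝ}

theorem qX_pos [NeZero n] (hp : ∀ x y, 0 < p x y) (hq : ∀ z x y, 0 < q z x y) (z : Fin k)
    (x : Fin m) : 0 < qX p q z x :=
  mixture_pos (hp x) (fun z y => hq z x y) z

theorem qY_pos [NeZero m] (hp : ∀ x y, 0 < p x y) (hq : ∀ z x y, 0 < q z x y) (z : Fin k)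
    (y : Fin n) : 0 < qY p q z y :=
  mixture_pos (fun x => hp x y) (fun z x => hq z x y) z

theorem sum_qX [NeZero n] (hp : ∀ x y, 0 < p x y) (hq : IsCondPMF q) (x : Fin m) :
    ∑ z, qX p q z x = 1 :=
  sum_mixture (hp x) (fun y => hq.2 x y)

theorem sum_qY [NeZero m] (hp : ∀ x y, 0 < p x y) (hq : IsCondPMF q) (y : Fin n) :
    ∑ z, qY p q z y = 1 :=
  sum_mixture (fun x => hp x y) (fun x => hq.2 x y)

theorem sum_mul_eq_qX_mul [NeZero n] (hp : ∀ x y, 0 < p x y) (z : Fin k) (x : Fin m) :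
    ∑ y, q z x y * p x y = qX p q z x * ∑ y, p x y :=
  (div_mul_cancel₀ _ (sum_pos (fun y _ => hp x y) univ_nonempty).ne').symm

theorem sum_mul_eq_qY_mul [NeZero m] (hp : ∀ x y, 0 < p x y) (z : Fin k) (y : Fin n) :
    ∑ x, q z x y * p x y = qY p q z y * ∑ x, p x y :=
  (div_mul_cancel₀ _ (sum_pos (fun x _ => hp x y) univ_nonempty).ne').symm

theorem qZ_pos [NeZero m] [NeZero n] (hp : ∀ x y, 0 < p x y) (hq : ∀ z x y, 0 < q z x y)
    (z : Fin k) : 0 < qZ p q z :=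
  sum_pos (fun x _ => sum_pos (fun y _ => mul_pos (hq z x y) (hp x y)) univ_nonempty)
    univ_nonempty

noncomputable def latentObjective (p : Fin m → Fin n → ℝ) (q : Fin k → Fin m → Fin n → ℝ)
    (a : Fin k → Fin m → ℝ) (b : Fin k → Fin n → ℝ) : ℝ :=
  ∑ x, ∑ y, ∑ z, q z x y * p x y * (log (q z x y) - log (a z x) - log (b z y))

theorem loss_one_eq [NeZero m] [NeZero n] (hp : ∀ x y, 0 < p x y) (hq : IsCondPMF q) :
    loss 1 p q = mutualInfo p + latentObjective p q (qX p q) (qY p q) := by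
  have pointwise : ∀ (x : Fin m) (y : Fin n) (z : Fin k),
      q z x y * p x y * log (q z x y * p x y * qZ p q z /
        ((∑ y', q z x y' * p x y') * (∑ x', q z x' y * p x' y))) =
      q z x y * p x y * (log (q z x y) - log (qX p q z x) - log (qY p q z y)) +
        q z x y * (p x y * log (p x y / ((∑ y', p x y') * (∑ x', p x' y)))) +
        q z x y * p x y * log (qZ p q z) := by
    intro x y z
    have := hq.1 z x y; have := hp x y; have := qX_pos hp hq.1 z x; have := qY_pos hp hq.1 z y
    have := qZ_pos hp hq.1 z
    have : 0 < ∑ y', p x y' := sum_pos (fun y _ => hp x y) univ_nonempty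
    have : 0 < ∑ x', p x' y := sum_pos (fun x _ => hp x y) univ_nonempty
    rw [sum_mul_eq_qX_mul hp, sum_mul_eq_qY_mul hp,
      show q z x y * p x y * qZ p q z /
          (qX p q z x * (∑ y', p x y') * (qY p q z y * ∑ x', p x' y)) =
        q z x y / (qX p q z x * qY p q z y) * (p x y / ((∑ y', p x y') * (∑ x', p x' y))) *
          qZ p q z by field_simp,
      log_mul (by positivity) (by positivity), log_mul (by positivity) (by positivity),
      log_div (by positivity) (by positivity), log_mul (by positivity) (by positivity)]
    ring
  have mutualInfo_eq : ∑ x, ∑ y, ∑ z,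
      q z x y * (p x y * log (p x y / ((∑ y', p x y') * (∑ x', p x' y)))) = mutualInfo p := by
    simp only [← sum_mul, hq.2, one_mul, mutualInfo]
  have entropy_eq : ∑ x, ∑ y, ∑ z, q z x y * p x y * log (qZ p q z) =
      ∑ z, qZ p q z * log (qZ p q z) := by
    rw [sum_congr rfl fun x _ => sum_comm, sum_comm]
    simp only [← sum_mul]
    rfl
  simp only [loss, pointwise, sum_add_distrib, mutualInfo_eq, entropy_eq, latentObjective]
  ring

theorem latentObjective_eq_sum_mul_sum {a : Fin k → Fin m → ℝ} {b : Fin k → Fin n → ℝ}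
    (ha : ∀ z x, 0 < a z x) (hb : ∀ z y, 0 < b z y) :
    latentObjective p q a b =
      ∑ x, ∑ y, p x y * ∑ z, q z x y * (log (q z x y) - log (a z x * b z y)) := by
  simp only [latentObjective, mul_sum, log_mul (ha _ _).ne' (hb _ _).ne']
  exact sum_congr rfl fun x _ => sum_congr rfl fun y _ => sum_congr rfl fun z _ => by ring

theorem latentObjective_marginals_le [NeZero m] [NeZero n] (hp : ∀ x y, 0 < p x y)
    (hq : IsCondPMF q) {a : Fin k → Fin m → ℝ} {b : Fin k → Fin n → ℝ}
    (ha : ∀ z x, 0 < a z x) (ha1 : ∀ x, ∑ z, a z x = 1)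
    (hb : ∀ z y, 0 < b z y) (hb1 : ∀ y, ∑ z, b z y = 1) :
    latentObjective p q (qX p q) (qY p q) ≤ latentObjective p q a b := by
  have hX : ∑ x, ∑ y, ∑ z, q z x y * p x y * log (a z x) ≤
      ∑ x, ∑ y, ∑ z, q z x y * p x y * log (qX p q z x) :=
    sum_le_sum fun x _ => sum_sum_mul_log_le_sum_sum_mul_log_mixture (hp x)
      (fun z y => hq.1 z x y) (fun y => hq.2 x y) (a · x) (ha · x) (ha1 x)
  have hY : ∑ x, ∑ y, ∑ z, q z x y * p x y * log (b z y) ≤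
      ∑ x, ∑ y, ∑ z, q z x y * p x y * log (qY p q z y) := by
    rw [sum_comm, sum_comm (f := fun x y => ∑ z, q z x y * p x y * log (qY p q z y))]
    exact sum_le_sum fun y _ => sum_sum_mul_log_le_sum_sum_mul_log_mixture (hp · y)
      (fun z x => hq.1 z x y) (fun x => hq.2 x y) (b · y) (hb · y) (hb1 y)
  simp only [latentObjective, mul_sub, sum_sub_distrib]
  linarith

theorem latentUpdate_one_apply (z : Fin k) (x : Fin m) (y : Fin n) :
    latentUpdate 1 p q z x y =
      qX p q z x * qY p q z y / ∑ z', qX p q z' x * qY p q z' y := by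
  simp [latentUpdate]

theorem latentUpdate_one_isCondPMF [NeZero m] [NeZero n] [NeZero k] (hp : ∀ x y, 0 < p x y)
    (hq : ∀ z x y, 0 < q z x y) : IsCondPMF (latentUpdate 1 p q) := by
  have hN : ∀ x y, 0 < ∑ z, qX p q z x * qY p q z y := fun x y =>
    sum_pos (fun z _ => mul_pos (qX_pos hp hq z x) (qY_pos hp hq z y)) univ_nonempty
  refine ⟨fun z x y => ?_, fun x y => ?_⟩
  · rw [latentUpdate_one_apply]
    exact div_pos (mul_pos (qX_pos hp hq z x) (qY_pos hp hq z y)) (hN x y)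
  · simp only [latentUpdate_one_apply, ← sum_div, div_self (hN x y).ne']

theorem neg_log_le_latentObjective (hp : ∀ x y, 0 ≤ p x y) (hq : IsCondPMF q)
    {a : Fin k → Fin m → ℝ} {b : Fin k → Fin n → ℝ}
    (ha : ∀ z x, 0 < a z x) (hb : ∀ z y, 0 < b z y) :
    ∑ x, ∑ y, p x y * -log (∑ z, a z x * b z y) ≤ latentObjective p q a b := by
  rw [latentObjective_eq_sum_mul_sum ha hb]
  exact sum_le_sum fun x _ => sum_le_sum fun y _ => mul_le_mul_of_nonneg_left
    (Real.neg_log_sum_le_sum_mul_log_sub _ _ (hq.1 · x y) (hq.2 x y)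
      fun z => mul_pos (ha z x) (hb z y)) (hp x y)

theorem latentObjective_latentUpdate_one [NeZero m] [NeZero n] [NeZero k]
    (hp : ∀ x y, 0 < p x y) (hq : ∀ z x y, 0 < q z x y) :
    latentObjective p (latentUpdate 1 p q) (qX p q) (qY p q) =
      ∑ x, ∑ y, p x y * -log (∑ z, qX p q z x * qY p q z y) := by
  rw [latentObjective_eq_sum_mul_sum (qX_pos hp hq) (qY_pos hp hq)]
  exact sum_congr rfl fun x _ => sum_congr rfl fun y _ => congrArg (p x y * ·)
    (Real.neg_log_sum_eq_sum_mul_log_sub _ _ (fun z => mul_pos (qX_pos hp hq z x)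
      (qY_pos hp hq z y)) fun z => latentUpdate_one_apply z x y).symm

end LatentSearch

/-- Monotone decrease of the loss for `β = 1`: the LatentSearch update with
`β = 1` produces a strictly positive conditional pmf and does not increase the loss. -/
theorem latentUpdate_loss_nonincreasing (m n k : ℕ)
    (hm : 1 ≤ m) (hn : 1 ≤ n) (hk : 1 ≤ k)
    (p : Fin m → Fin n → ℝ) (hp : IsJointPMF p)
    (q : Fin k → Fin m → Fin n → ℝ) (hq : IsCondPMF q) :
    IsCondPMF (latentUpdate 1 p q) ∧ loss 1 p (latentUpdate 1 p q) ≤ loss 1 p q := by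
  have : NeZero m := .of_pos hm
  have : NeZero n := .of_pos hn
  have : NeZero k := .of_pos hk
  obtain ⟨hp, -⟩ := hp
  set T := latentUpdate 1 p q
  have hT : IsCondPMF T := latentUpdate_one_isCondPMF hp hq.1
  refine ⟨hT, ?_⟩
  rw [loss_one_eq hp hT, loss_one_eq hp hq, add_le_add_iff_left]
  calc latentObjective p T (qX p T) (qY p T)
      ≤ latentObjective p T (qX p q) (qY p q) :=
        latentObjective_marginals_le hp hT (qX_pos hp hq.1) (sum_qX hp hq)
          (qY_pos hp hq.1) (sum_qY hp hq)
    _ = ∑ x, ∑ y, p x y * -log (∑ z, qX p q z x * qY p q z y) :=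
        latentObjective_latentUpdate_one hp hq.1
    _ ≤ latentObjective p q (qX p q) (qY p q) :=
        neg_log_le_latentObjective (fun x y => (hp x y).le) hq (qX_pos hp hq.1) (qY_pos hp hq.1)
end

section
/- (Generic full rank of the triangle-graph joint distribution matrix.) Fix integers m, n, k ≥ 1. For Lebesgue-almost-every parameter tuple (ζ, (ξ_i)_{i ∈ Fin k}, (η_{i,j})_{(i,j) ∈ Fin k × Fin m}) in the triangle-graph parameter space, the m × n real matrix M defined by M x y = p(x, y) = ∑_{i ∈ Fin k} φ_k(ζ)_i · φ_m(ξ_i)_x · φ_n(η_{i,x})_y has rank equal to min{m, n}. -/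
open Finset MeasureTheory

/-- The parametrized simplex `Δ_{n-1} ⊆ ℝ^{n-1}`:
`{a | a_j ≥ 0 for all j, ∑ j, a j ≤ 1}`. -/
def simplexParam (n : ℕ) : Set (Fin (n - 1) → ℝ) :=
  {a | (∀ j, 0 ≤ a j) ∧ ∑ j, a j ≤ 1}

/-- The lift `φ_n : ℝ^{n-1} → ℝⁿ`, `φ_n(a) = (a_1, …, a_{n-1}, 1 - ∑ j, a j)`, which maps
`Δ_{n-1}` onto the standard probability simplex in `ℝⁿ`. -/
noncomputable def liftSimplex (n : ℕ) (a : Fin (n - 1) → ℝ) : Fin n → ℝ :=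
  fun i => if h : (i : ℕ) < n - 1 then a ⟨i, h⟩ else 1 - ∑ j, a j

/-- The triangle-graph parameter space: `ζ ∈ Δ_{k-1}` parametrizes `P(Z)`, each `ξ i ∈ Δ_{m-1}`
parametrizes `P(X | Z = i)`, and each `η i j ∈ Δ_{n-1}` parametrizes `P(Y | Z = i, X = j)`. -/
def InTriangleParams (m n k : ℕ)
    (θ : (Fin (k - 1) → ℝ) × (Fin k → Fin (m - 1) → ℝ) ×
      (Fin k → Fin m → Fin (n - 1) → ℝ)) : Prop :=
  θ.1 ∈ simplexParam k ∧ (∀ i, θ.2.1 i ∈ simplexParam m) ∧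
    ∀ i j, θ.2.2 i j ∈ simplexParam n

/-- The joint pmf of `(X, Y)` generated by the triangle causal graph
`Z → X`, `Z → Y`, `X → Y`:
`p(x, y) = ∑ i, P(Z = i) P(X = x | Z = i) P(Y = y | Z = i, X = x)`. -/
noncomputable def trianglePMF (m n k : ℕ)
    (θ : (Fin (k - 1) → ℝ) × (Fin k → Fin (m - 1) → ℝ) ×
      (Fin k → Fin m → Fin (n - 1) → ℝ)) (x : Fin m) (y : Fin n) : ℝ :=
  ∑ i, liftSimplex k θ.1 i * liftSimplex m (θ.2.1 i) x * liftSimplex n (θ.2.2 i x) y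

/-!
The bad parameters lie in the zero set of a single real polynomial in the (flattened) parameter
coordinates: the leading `min m n × min m n` minor of the matrix of polynomials `p(x, y)`. This
polynomial is nonzero, since at the parameter with `Z` and `X` uniform and `Y = X` the minor is
`m⁻¹ • 1`. The zero set of a nonzero real polynomial is Lebesgue-null, by induction on the number
of variables and Fubini: off the null zero set of its leading coefficient with respect to one
variable, each fibre in that variable is the finite root set of a nonzero univariate polynomial.
-/

theorem MeasureTheory.measurePreserving_uncurry {ι κ X : Type*} [Fintype ι] [Fintype κ]
    [MeasurableSpace X] (μ : Measure X) [SigmaFinite μ] :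
    MeasurePreserving (Function.uncurry : (ι → κ → X) → ι × κ → X)
      (Measure.pi fun _ => Measure.pi fun _ => μ) (Measure.pi fun _ => μ) := by
  have hmeas : Measurable (Function.uncurry : (ι → κ → X) → ι × κ → X) :=
    (MeasurableEquiv.curry ι κ X).symm.measurable
  refine ⟨hmeas, (Measure.pi_eq fun s hs => ?_).symm⟩
  have hpre : Function.uncurry ⁻¹' Set.univ.pi s =
      Set.univ.pi fun i => Set.univ.pi fun j => s (i, j) := by
    ext; simp [Prod.forall]
  rw [Measure.map_apply hmeas (.univ_pi hs), hpre, Measure.pi_pi]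
  simp_rw [Measure.pi_pi]
  exact (Fintype.prod_prod_type fun ij => μ (s ij)).symm

namespace MvPolynomial

theorem volume_setOf_eval_eq_zero_fin :
    ∀ {N : ℕ} {p : MvPolynomial (Fin N) ℝ}, p ≠ 0 → volume {x | eval x p = 0} = 0
  | 0, p, hp => by
    obtain ⟨c, rfl⟩ := C_surjective (Fin 0) p
    simp [show c ≠ 0 by rintro rfl; simp at hp]
  | N + 1, p, hp => by
    set q := finSuccEquiv ℝ N p
    have hlc : q.leadingCoeff ≠ 0 :=
      Polynomial.leadingCoeff_ne_zero.2 ((map_ne_zero_iff _ (finSuccEquiv ℝ N).injective).2 hp)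
    let e := (MeasurableEquiv.piFinSuccAbove (fun _ : Fin (N + 1) => ℝ) 0).trans
      MeasurableEquiv.prodComm
    have he : MeasurePreserving e.symm (volume.prod volume) volume :=
      ((volume_preserving_piFinSuccAbove (fun _ => ℝ) 0).symm _).comp
        Measure.measurePreserving_swap
    have hfibre : ∀ s t, eval (e.symm (s, t)) p = (q.map (eval s)).eval t := fun s t => by
      show eval (Fin.insertNth 0 t s) p = _
      rw [Fin.insertNth_zero']
      exact eval_eq_eval_mv_eval' s t p
    have hZ : MeasurableSet {x : Fin (N + 1) → ℝ | eval x p = 0} :=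
      measurableSet_eq_fun (continuous_eval p).measurable measurable_const
    rw [← he.measure_preimage_equiv, Measure.measure_prod_null (hZ.preimage e.symm.measurable)]
    have hlead : ∀ᵐ s : Fin N → ℝ, eval s q.leadingCoeff ≠ 0 :=
      ae_iff.2 (by simpa only [ne_eq, not_not] using volume_setOf_eval_eq_zero_fin hlc)
    filter_upwards [hlead] with s hs
    have hqs : q.map (eval s) ≠ 0 := fun h => hs <| by
      have := congrArg (Polynomial.coeff · q.natDegree) h
      rwa [Polynomial.coeff_map, Polynomial.coeff_zero] at this
    have hroots :
        Prod.mk s ⁻¹' (e.symm ⁻¹' {x | eval x p = 0}) = {t | (q.map (eval s)).IsRoot t} :=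
      Set.ext fun t => (hfibre s t).congr_left
    rw [hroots]
    exact (Polynomial.finite_setOfPred_isRoot hqs).measure_zero _

theorem volume_setOf_eval_eq_zero {ι : Type*} [Fintype ι] {p : MvPolynomial ι ℝ} (hp : p ≠ 0) :
    volume {x : ι → ℝ | eval x p = 0} = 0 := by
  let e := Fintype.equivFin ι
  have he := volume_preserving_arrowCongr' e.symm (MeasurableEquiv.refl ℝ) (.id volume)
  rw [← he.measure_preimage_equiv]
  convert volume_setOf_eval_eq_zero_fin ((rename_injective _ e.injective).ne_iff.2 hp) using 3
  ext x
  simp only [Set.mem_preimage, Set.mem_ofPred_eq, eval_rename]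
  rfl

end MvPolynomial

namespace Matrix

theorem le_rank_of_det_submatrix_ne_zero {K m n : Type*} [Field K] [Fintype n] {r : ℕ}
    (A : Matrix m n K) {f : Fin r → m} {g : Fin r → n} (h : (A.submatrix f g).det ≠ 0) :
    r ≤ A.rank :=
  calc r = (A.submatrix f g).rank := by
        rw [rank_of_isUnit _ ((isUnit_iff_isUnit_det _).2 h.isUnit), Fintype.card_fin]
    _ ≤ A.rank := rank_submatrix_le _ _ _

theorem ae_le_rank_map_eval {ι m n : Type*} [Fintype ι] [Fintype n] {r : ℕ}
    (P : Matrix m n (MvPolynomial ι ℝ)) (f : Fin r → m) (g : Fin r → n) {x₀ : ι → ℝ}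
    (h₀ : ((P.map (MvPolynomial.eval x₀)).submatrix f g).det ≠ 0) :
    ∀ᵐ x, r ≤ (P.map (MvPolynomial.eval x)).rank := by
  have heval : ∀ x, MvPolynomial.eval x (P.submatrix f g).det =
      ((P.map (MvPolynomial.eval x)).submatrix f g).det := fun x => by
    rw [RingHom.map_det]; rfl
  have hD : (P.submatrix f g).det ≠ 0 := fun h => h₀ (by rw [← heval, h, map_zero])
  refine ae_iff.2 (measure_mono_null (fun x hx => ?_) (MvPolynomial.volume_setOf_eval_eq_zero hD))
  by_contra hne
  exact hx (le_rank_of_det_submatrix_ne_zero _ (by rwa [← heval]))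

end Matrix

theorem liftSimplex_comp_castLE {N : ℕ} {p : Fin N → ℝ} (hp : ∑ i, p i = 1) :
    liftSimplex N (p ∘ Fin.castLE (N.sub_le 1)) = p := by
  obtain _ | N := N
  · exact funext fun i => i.elim0
  rw [Fin.sum_univ_castSucc] at hp
  funext i
  unfold liftSimplex
  split_ifs with h
  · rfl
  · obtain rfl : i = Fin.last N := Fin.ext (by simp at h ⊢; omega)
    show 1 - ∑ j : Fin N, p j.castSucc = p (Fin.last N)
    linarith

abbrev TriangleIndex (m n k : ℕ) : Type :=
  Fin (k - 1) ⊕ (Fin k × Fin (m - 1)) ⊕ (Fin k × Fin m × Fin (n - 1))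

abbrev TriangleParam (m n k : ℕ) : Type :=
  (Fin (k - 1) → ℝ) × (Fin k → Fin (m - 1) → ℝ) × (Fin k → Fin m → Fin (n - 1) → ℝ)

def triangleCoords (m n k : ℕ) (θ : TriangleParam m n k) : TriangleIndex m n k → ℝ :=
  Sum.elim θ.1 <| Sum.elim (Function.uncurry θ.2.1) <|
    Function.uncurry fun i => Function.uncurry (θ.2.2 i)

theorem measurePreserving_triangleCoords (m n k : ℕ) :
    MeasurePreserving (triangleCoords m n k) volume volume :=
  (volume_measurePreserving_sumPiEquivProdPi_symm fun _ => ℝ).comp <|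
    (MeasurePreserving.id volume).prod <|
      (volume_measurePreserving_sumPiEquivProdPi_symm fun _ => ℝ).comp <|
        (measurePreserving_uncurry volume).prod <|
          (measurePreserving_uncurry volume).comp <|
            measurePreserving_pi _ _ fun _ => measurePreserving_uncurry volume

open MvPolynomial in
noncomputable def liftSimplexPoly (N : ℕ) (i : Fin N) : MvPolynomial (Fin (N - 1)) ℝ :=
  if h : (i : ℕ) < N - 1 then X ⟨i, h⟩ else 1 - ∑ j, X j

theorem eval_liftSimplexPoly {N : ℕ} (a : Fin (N - 1) → ℝ) (i : Fin N) :
    MvPolynomial.eval a (liftSimplexPoly N i) = liftSimplex N a i := by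
  unfold liftSimplexPoly liftSimplex
  split_ifs <;> simp

open MvPolynomial in
noncomputable def trianglePoly (m n k : ℕ) (x : Fin m) (y : Fin n) :
    MvPolynomial (TriangleIndex m n k) ℝ :=
  ∑ i, rename Sum.inl (liftSimplexPoly k i) *
    rename (fun j => .inr (.inl (i, j))) (liftSimplexPoly m x) *
    rename (fun j => .inr (.inr (i, x, j))) (liftSimplexPoly n y)

theorem map_eval_trianglePoly (m n k : ℕ) (θ : TriangleParam m n k) :
    (Matrix.of (trianglePoly m n k)).map (MvPolynomial.eval (triangleCoords m n k θ)) =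
      Matrix.of (trianglePMF m n k θ) := by
  ext x y
  simp only [Matrix.map_apply, Matrix.of_apply, trianglePoly, trianglePMF, map_sum, map_mul,
    MvPolynomial.eval_rename, eval_liftSimplexPoly]
  rfl

noncomputable def triangleWitness (m n k : ℕ) : TriangleParam m n k :=
  (fun _ => (k : ℝ)⁻¹, fun _ _ => (m : ℝ)⁻¹, fun _ x j => if (j : ℕ) = x then 1 else 0)

theorem trianglePMF_triangleWitness {m n k : ℕ} (hk : 1 ≤ k) {x : Fin m} (y : Fin n)
    (hx : (x : ℕ) < n) :
    trianglePMF m n k (triangleWitness m n k) x y = if (y : ℕ) = x then (m : ℝ)⁻¹ else 0 := by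
  have hζ (i : Fin k) : liftSimplex k (fun _ => (k : ℝ)⁻¹) i = (k : ℝ)⁻¹ :=
    congrFun (liftSimplex_comp_castLE (p := fun _ => (k : ℝ)⁻¹) (by simp; field_simp)) i
  have hξ : liftSimplex m (fun _ => (m : ℝ)⁻¹) x = (m : ℝ)⁻¹ :=
    congrFun (liftSimplex_comp_castLE (p := fun _ => (m : ℝ)⁻¹)
      (by simp [Nat.cast_ne_zero.2 x.pos.ne'])) x
  have hη : liftSimplex n (fun j => if (j : ℕ) = x then 1 else 0) y =
      if (y : ℕ) = x then 1 else 0 := by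
    refine congrFun (liftSimplex_comp_castLE (p := fun y : Fin n => if (y : ℕ) = x then 1 else 0)
      ?_) y
    rw [Fin.sum_univ_eq_sum_range (fun y => if y = (x : ℕ) then (1 : ℝ) else 0),
      Finset.sum_ite_eq']
    simp [hx]
  simp only [trianglePMF, triangleWitness, hζ, hξ, hη, sum_const, card_univ, Fintype.card_fin,
    nsmul_eq_mul]
  have : (k : ℝ) ≠ 0 := by positivity
  split_ifs <;> simp [this]

theorem det_triangleWitness_ne_zero {m n k : ℕ} (hk : 1 ≤ k) :
    ((Matrix.of (trianglePMF m n k (triangleWitness m n k))).submatrix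
      (Fin.castLE (min_le_left m n)) (Fin.castLE (min_le_right m n))).det ≠ 0 := by
  have hdiag : (Matrix.of (trianglePMF m n k (triangleWitness m n k))).submatrix
      (Fin.castLE (min_le_left m n)) (Fin.castLE (min_le_right m n)) =
      Matrix.diagonal fun _ => (m : ℝ)⁻¹ := by
    ext x y
    rw [Matrix.submatrix_apply, Matrix.of_apply,
      trianglePMF_triangleWitness hk (x := Fin.castLE (min_le_left m n) x) _
        (x.2.trans_le (min_le_right m n))]
    simp [Matrix.diagonal_apply, Fin.ext_iff, eq_comm]
  rw [hdiag, Matrix.det_diagonal]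
  exact prod_ne_zero_iff.2 fun x _ => inv_ne_zero (Nat.cast_ne_zero.2 (by have := x.2; omega))

theorem triangle_pmf_matrix_full_rank_ae_general (m n k : ℕ)
    (hk : 1 ≤ k) :
    volume {θ : (Fin (k - 1) → ℝ) × (Fin k → Fin (m - 1) → ℝ) ×
        (Fin k → Fin m → Fin (n - 1) → ℝ) |
      InTriangleParams m n k θ ∧
      (Matrix.of fun x y => trianglePMF m n k θ x y).rank ≠ min m n} = 0 := by
  have hpoly := (Matrix.of (trianglePoly m n k)).ae_le_rank_map_eval
    (Fin.castLE (min_le_left m n)) (Fin.castLE (min_le_right m n))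
    (x₀ := triangleCoords m n k (triangleWitness m n k))
    (by rw [map_eval_trianglePoly]; exact det_triangleWitness_ne_zero hk)
  have hgeneric : ∀ᵐ θ : TriangleParam m n k, min m n ≤ (Matrix.of (trianglePMF m n k θ)).rank := by
    filter_upwards [(measurePreserving_triangleCoords m n k).quasiMeasurePreserving.ae hpoly]
      with θ hθ
    rwa [map_eval_trianglePoly] at hθ
  refine measure_mono_null (fun θ hθ => ?_) (ae_iff.1 hgeneric)
  exact fun hle => hθ.2 <|
    le_antisymm (le_min (Matrix.rank_le_height _) (Matrix.rank_le_width _)) hle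

/-- Generic full rank of the triangle-graph joint distribution matrix: for
Lebesgue-almost every parameter tuple of the triangle graph, the `m × n` matrix
`M x y = p(x, y)` has rank `min{m, n}`. -/
theorem triangle_pmf_matrix_full_rank_ae (m n k : ℕ)
    (hm : 1 ≤ m) (hn : 1 ≤ n) (hk : 1 ≤ k) :
    volume {θ : (Fin (k - 1) → ℝ) × (Fin k → Fin (m - 1) → ℝ) ×
        (Fin k → Fin m → Fin (n - 1) → ℝ) |
      InTriangleParams m n k θ ∧
      (Matrix.of fun x y => trianglePMF m n k θ x y).rank ≠ min m n} = 0 :=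
  triangle_pmf_matrix_full_rank_ae_general m n k hk
end
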